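/- arXiv:1708.02172 — 2 statements merged into one kernel-verified Lean document; each statement's English description precedes it below -/
import Mathlib

section
/- Let g be a Lie algebra of the form g = h ⊕ ⊕_{α ∈ Φ} g_α where h is abelian, each g_α is one-dimensional spanned by X_α for α in a finite subset Φ of h* spanning h*, [h, X_α] is given by [H,X_α] = α(H)X_α, and Φ is a root system (in particular, for each α ∈ Φ also −α ∈ Φ, and α(H_α) ≠ 0 where H_α = [X_α, X_{−α}]). Then any abelian ideal A of g is zero; hence g is semisimple. -/
/-!
An abelian ideal `A` contains no root vector `X α`: otherwise it would contain
`H_α = ⁅X α, X (-α)⁆` and hence the nonzero bracket `⁅H_α, X α⁆ = α(H_α) • X α`.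
Choose `h ∈ H` on which the finitely many roots occurring in `a ∈ A` take distinct nonzero values
(a vector space over `ℂ` is not a finite union of proper subspaces). Interpolation polynomials in
`ad h` then show that each root component of `⁅h, a⁆ ∈ A` lies in `A`, so all these components
vanish and `a ∈ H`. Finally every root kills `a`, because `⁅a, X α⁆ = α(a) • X α ∈ A`; as the
roots span `H*`, `a = 0`.
-/

open Polynomial

namespace Module.End

theorem aeval_apply_mem_of_mapsTo {R M : Type*} [CommRing R] [AddCommGroup M] [Module R M]
    {f : Module.End R M} {p : Submodule R M} (hf : Set.MapsTo f p p) (q : R[X]) {x : M}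
    (hx : x ∈ p) : aeval f q x ∈ p := by
  rw [aeval_eq_sum_range, LinearMap.sum_apply]
  refine p.sum_mem fun n _ ↦ p.smul_mem _ ?_
  rw [Module.End.pow_apply]
  exact hf.iterate n hx

theorem mem_of_sum_mem_of_apply_eq_smul {K V ι : Type*} [Field K] [AddCommGroup V]
    [Module K V] [DecidableEq ι] {f : Module.End K V} {p : Submodule K V}
    (hf : Set.MapsTo f p p) {s : Finset ι} {v : ι → V} {μ : ι → K} (hμ : Set.InjOn μ s)
    (hv : ∀ i ∈ s, f (v i) = μ i • v i) (hsum : ∑ i ∈ s, v i ∈ p) {i : ι} (hi : i ∈ s) :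
    v i ∈ p := by
  have hinterp : aeval f (Lagrange.basis s μ i) (∑ j ∈ s, v j) = v i := by
    rw [map_sum, Finset.sum_eq_single_of_mem i hi]
    · rw [aeval_apply_of_mem_apply_eq_smul (hv i hi), Lagrange.eval_basis_self hμ hi, one_smul]
    · intro j hj hji
      rw [aeval_apply_of_mem_apply_eq_smul (hv j hj), Lagrange.eval_basis_of_ne hji.symm hj,
        zero_smul]
  exact hinterp ▸ aeval_apply_mem_of_mapsTo hf _ hsum

end Module.End

theorem Module.Dual.exists_injOn_apply {K V : Type*} [Field K] [Infinite K] [AddCommGroup V]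
    [Module K V] (s : Finset (Module.Dual K V)) :
    ∃ v : V, Set.InjOn (fun f : Module.Dual K V ↦ f v) s := by
  classical
  set F := s.offDiag.image fun fg ↦ LinearMap.ker (fg.1 - fg.2)
  have htop : ⊤ ∉ F := by
    simp only [F, Finset.mem_image, Finset.mem_offDiag, LinearMap.ker_eq_top, sub_eq_zero]
    rintro ⟨⟨f, g⟩, ⟨-, -, hne⟩, heq⟩
    exact hne heq
  obtain ⟨v, hv⟩ :=
    (Set.ne_univ_iff_exists_notMem _).mp (Subspace.biUnion_ne_univ_of_top_notMem htop)
  refine ⟨v, fun f hf g hg hfg ↦ by_contra fun hne ↦ hv ?_⟩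
  have hfg_mem : (f, g) ∈ s.offDiag := Finset.mem_offDiag.mpr ⟨hf, hg, hne⟩
  refine Set.mem_biUnion (Finset.mem_image_of_mem _ hfg_mem) ?_
  simpa [sub_eq_zero] using hfg

namespace LieIdeal

variable {K L : Type*} [Field K] [LieRing L] [LieAlgebra K L]

theorem notMem_of_lie_lie_eq_smul (A : LieIdeal K L) [IsLieAbelian A] {x y : L} {c : K}
    (hc : c ≠ 0) (hx : x ≠ 0) (h : ⁅⁅x, y⁆, x⁆ = c • x) : x ∉ A := by
  intro hxA
  have hzero : ⁅⁅x, y⁆, x⁆ = 0 :=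
    congrArg Subtype.val (trivial_lie_zero A A ⟨_, lie_mem_left K L A _ _ hxA⟩ ⟨x, hxA⟩)
  exact smul_ne_zero hc hx (h ▸ hzero)

variable {H : LieSubalgebra K L} {Φ : Set (Module.Dual K H)} {X : Module.Dual K H → L}

theorem eq_zero_of_lie_linearCombination_mem [Infinite K]
    (hact : ∀ α ∈ Φ, ∀ h : H, ⁅(h : L), X α⁆ = α h • X α) (hΦ : 0 ∉ Φ)
    (A : LieIdeal K L) (hXA : ∀ α ∈ Φ, X α ∉ A) {c : Module.Dual K H →₀ K}
    (hc : ↑c.support ⊆ Φ) (hcA : ∀ h : H, ⁅(h : L), Finsupp.linearCombination K X c⁆ ∈ A) :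
    c = 0 := by
  classical
  obtain ⟨h, hh⟩ := Module.Dual.exists_injOn_apply (insert 0 c.support)
  have hroot_ne : ∀ α ∈ c.support, α h ≠ 0 := fun α hα hzero ↦
    ne_of_mem_of_not_mem (hc hα) hΦ <| hh (by simp [hα]) (by simp) hzero
  have heig : ∀ α ∈ c.support, ⁅(h : L), (α h * c α) • X α⁆ = α h • (α h * c α) • X α := by
    intro α hα
    rw [lie_smul, hact α (hc hα), smul_comm]
  have hsum : ⁅(h : L), Finsupp.linearCombination K X c⁆ =
      ∑ α ∈ c.support, (α h * c α) • X α := by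
    rw [Finsupp.linearCombination_apply, Finsupp.sum, lie_sum]
    refine Finset.sum_congr rfl fun α hα ↦ ?_
    rw [lie_smul, hact α (hc hα), smul_smul, mul_comm]
  ext α
  by_contra hcα
  have hα : α ∈ c.support := Finsupp.mem_support_iff.mpr hcα
  have hmem := Module.End.mem_of_sum_mem_of_apply_eq_smul (f := LieAlgebra.ad K L h)
    (p := A.toSubmodule) (fun _ hx ↦ A.lie_mem hx) (hh.mono (Finset.subset_insert _ _))
    heig (hsum ▸ hcA h) hα
  exact hXA α (hc hα) ((Submodule.smul_mem_iff _ (mul_ne_zero (hroot_ne α hα) hcα)).mp hmem)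

theorem eq_bot_of_forall_rootVector_notMem [Infinite K] (habelian : IsLieAbelian H)
    (hspan : H.toSubmodule ⊔ Submodule.span K (X '' Φ) = ⊤)
    (hact : ∀ α ∈ Φ, ∀ h : H, ⁅(h : L), X α⁆ = α h • X α) (hΦ : 0 ∉ Φ)
    (hdual : Submodule.span K Φ = ⊤) (A : LieIdeal K L) (hXA : ∀ α ∈ Φ, X α ∉ A) :
    A = ⊥ := by
  rw [LieSubmodule.eq_bot_iff]
  intro a ha
  obtain ⟨y, hy, z, hz, rfl⟩ := Submodule.mem_sup.mp (hspan ▸ Submodule.mem_top : a ∈ _)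
  obtain ⟨c, hc, rfl⟩ := (Finsupp.mem_span_image_iff_linearCombination K).mp hz
  have hcomm : ∀ h : H, ⁅(h : L), y⁆ = 0 := fun h ↦
    congrArg Subtype.val (habelian.trivial h ⟨y, hy⟩)
  have hc0 : c = 0 := eq_zero_of_lie_linearCombination_mem hact hΦ A hXA hc fun h ↦ by
    simpa only [lie_add, hcomm, zero_add] using lie_mem_right K L A h _ ha
  rw [hc0, map_zero, add_zero] at ha ⊢
  have hroot : ∀ α ∈ Φ, α ⟨y, hy⟩ = 0 := fun α hα ↦ by
    by_contra hne
    exact hXA α hα ((Submodule.smul_mem_iff _ hne).mp (hact α hα _ ▸ lie_mem_left K L A _ _ ha))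
  have heval : Module.Dual.eval K H ⟨y, hy⟩ = 0 := LinearMap.ext_on hdual hroot
  exact congrArg Subtype.val
    ((Module.forall_dual_apply_eq_zero_iff K _).mp (LinearMap.congr_fun heval))

end LieIdeal

theorem no_abelian_ideals_of_root_decomposition_general
    (L : Type*) [LieRing L] [LieAlgebra ℂ L]
    (H : LieSubalgebra ℂ L) (habelian : IsLieAbelian H)
    (Φ : Set (Module.Dual ℂ H))
    (X : Module.Dual ℂ H → L)
    (hXne : ∀ α ∈ Φ, X α ≠ 0)
    (hspan : H.toSubmodule ⊔ Submodule.span ℂ (X '' Φ) = ⊤)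
    (hact : ∀ α ∈ Φ, ∀ h : H, ⁅(h : L), X α⁆ = α h • X α)
    (hHα : ∀ α ∈ Φ, ⁅X α, X (-α)⁆ ∈ H)
    (hαHα : ∀ α ∈ Φ, ∀ h : H, (h : L) = ⁅X α, X (-α)⁆ → α h ≠ 0)
    (hdual : Submodule.span ℂ Φ = ⊤) :
    (∀ A : LieIdeal ℂ L, IsLieAbelian A → A = ⊥) ∧
    LieAlgebra.HasTrivialRadical ℂ L := by
  have hΦ : (0 : Module.Dual ℂ H) ∉ Φ := fun h0 ↦ hαHα 0 h0 ⟨_, hHα 0 h0⟩ rfl rfl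
  have hab : ∀ A : LieIdeal ℂ L, IsLieAbelian A → A = ⊥ := fun A _ ↦
    A.eq_bot_of_forall_rootVector_notMem habelian hspan hact hΦ hdual fun α hα ↦
      A.notMem_of_lie_lie_eq_smul (hαHα α hα ⟨_, hHα α hα⟩ rfl) (hXne α hα)
        (hact α hα ⟨_, hHα α hα⟩)
  exact ⟨hab, (LieAlgebra.hasTrivialRadical_iff_no_abelian_ideals ℂ L).mpr hab⟩

/-- Let `L = h ⊕ ⊕_{α ∈ Φ} g_α` with `h` abelian, each `g_α` one-dimensional spanned by
`X α`, `[H, X α] = α(H) • X α`, `Φ` finite and spanning `h*`, closed under negation, and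
with `α(H_α) ≠ 0` for `H_α = [X α, X (−α)] ∈ h`.  Then every abelian ideal of `L` is zero;
hence `L` is semisimple (has trivial radical). -/
theorem no_abelian_ideals_of_root_decomposition
    (L : Type*) [LieRing L] [LieAlgebra ℂ L] [FiniteDimensional ℂ L]
    (H : LieSubalgebra ℂ L) (habelian : IsLieAbelian H)
    (Φ : Set (Module.Dual ℂ H)) (hfin : Φ.Finite)
    (X : Module.Dual ℂ H → L)
    (hXne : ∀ α ∈ Φ, X α ≠ 0)
    (hspan : H.toSubmodule ⊔ Submodule.span ℂ (X '' Φ) = ⊤)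
    (hind : LinearIndependent ℂ (fun α : Φ => X α.1))
    (hact : ∀ α ∈ Φ, ∀ h : H, ⁅(h : L), X α⁆ = α h • X α)
    (hneg : ∀ α ∈ Φ, -α ∈ Φ)
    (hbr : ∀ α ∈ Φ, ∀ β ∈ Φ, α + β ∈ Φ →
      ⁅X α, X β⁆ ∈ Submodule.span ℂ ({X (α + β)} : Set L))
    (hHα : ∀ α ∈ Φ, ⁅X α, X (-α)⁆ ∈ H)
    (hαHα : ∀ α ∈ Φ, ∀ h : H, (h : L) = ⁅X α, X (-α)⁆ → α h ≠ 0)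
    (hdual : Submodule.span ℂ Φ = ⊤) :
    (∀ A : LieIdeal ℂ L, IsLieAbelian A → A = ⊥) ∧
    LieAlgebra.HasTrivialRadical ℂ L :=
  no_abelian_ideals_of_root_decomposition_general L H habelian Φ X hXne hspan hact hHα hαHα hdual
end

section
/- Let N = ⊕_{α∈R̂} ℂ·X_α be a finite-dimensional complex Lie algebra graded by a finite set R̂ of linear functionals (on some abelian h acting diagonally with [X_α, X_β] ∈ ℂ·X_{α+β} if α+β ∈ R̂ and [X_α,X_β] = 0 otherwise). Suppose every sum of two elements of R̂ that lies in R̂ belongs to a subset 𝒵 ⊆ R̂, and that for all ζ ∈ 𝒵 and α ∈ R̂, ζ + α ∉ R̂. Then N satisfies the sandwich condition [N,[N,N]] = 0. -/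
/-- Let `N = ⊕_{α ∈ R̂} ℂ·X_α` be a complex Lie algebra graded by a finite set `R̂` of
weights, with `[X α, X β] ∈ ℂ·X (α+β)` if `α + β ∈ R̂` and `[X α, X β] = 0` otherwise.
If every sum of two elements of `R̂` lying in `R̂` belongs to `𝒵 ⊆ R̂`, and `ζ + α ∉ R̂`
for all `ζ ∈ 𝒵`, `α ∈ R̂`, then `N` satisfies the sandwich condition `[N,[N,N]] = 0`. -/
theorem sandwich_of_central_additive_relations
    (A L : Type*) [AddCommGroup A] [LieRing L] [LieAlgebra ℂ L]
    (R Zs : Finset A) (hZR : Zs ⊆ R)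
    (X : A → L)
    (hspan : Submodule.span ℂ (X '' R) = ⊤)
    (hbr1 : ∀ α ∈ R, ∀ β ∈ R, α + β ∈ R →
      ⁅X α, X β⁆ ∈ Submodule.span ℂ ({X (α + β)} : Set L))
    (hbr2 : ∀ α ∈ R, ∀ β ∈ R, α + β ∉ R → ⁅X α, X β⁆ = 0)
    (hZ1 : ∀ α ∈ R, ∀ β ∈ R, α + β ∈ R → α + β ∈ Zs)
    (hZ2 : ∀ ζ ∈ Zs, ∀ α ∈ R, ζ + α ∉ R) :
    ∀ x y z : L, ⁅x, ⁅y, z⁆⁆ = 0 := by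
  have key : ∀ a ∈ R, ∀ b ∈ R, ∀ c ∈ R, ⁅X a, ⁅X b, X c⁆⁆ = 0 := by
    intro a ha b hb c hc
    by_cases h : b + c ∈ R
    · obtain ⟨t, ht⟩ := Submodule.mem_span_singleton.mp (hbr1 b hb c hc h)
      have hz := hZ1 b hb c hc h
      have hnot : a + (b + c) ∉ R := by
        rw [add_comm]; exact hZ2 (b + c) hz a ha
      rw [← ht, lie_smul, hbr2 a ha (b + c) (hZR hz) hnot, smul_zero]
    · rw [hbr2 b hb c hc h, lie_zero]
  intro x y z
  have hx : x ∈ Submodule.span ℂ (X '' R) := hspan ▸ Submodule.mem_top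
  have hy : y ∈ Submodule.span ℂ (X '' R) := hspan ▸ Submodule.mem_top
  have hz : z ∈ Submodule.span ℂ (X '' R) := hspan ▸ Submodule.mem_top
  induction hx using Submodule.span_induction with
  | mem x hxm =>
    induction hy using Submodule.span_induction with
    | mem y hym =>
      induction hz using Submodule.span_induction with
      | mem z hzm =>
        obtain ⟨a, ha, rfl⟩ := hxm
        obtain ⟨b, hb, rfl⟩ := hym
        obtain ⟨c, hc, rfl⟩ := hzm
        exact key a ha b hb c hc
      | zero => simp
      | add u v _ _ hu hv => rw [lie_add, lie_add, hu, hv, add_zero]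
      | smul t u _ hu => rw [lie_smul, lie_smul, hu, smul_zero]
    | zero => simp
    | add u v _ _ hu hv => rw [add_lie, lie_add, hu, hv, add_zero]
    | smul t u _ hu => rw [smul_lie, lie_smul, hu, smul_zero]
  | zero => simp
  | add u v _ _ hu hv => rw [add_lie, hu, hv, add_zero]
  | smul t u _ hu => rw [smul_lie, hu, smul_zero]
end
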